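/- arXiv:2005.02063 — 4 statements merged into one kernel-verified Lean document; each statement's English description precedes it below -/
import Mathlib

section
/- Let $I$ be a compact interval and $f, g : I \to \mathbb{R}$ be continuous and strictly monotone. Define $d_{f,g}(t) := \sup \{ |\mathscr{A}_f(\mathbb{P}) - \mathscr{A}_g(\mathbb{P})| : \mathbb{P} \text{ a compactly supported Borel probability measure on } I \text{ with } |\gamma(\mathbb{P})| \le t \}$ for $t \in (0, |I|]$, where $\gamma(\mathbb{P}) = [\inf \operatorname{supp} \mathbb{P}, \sup \operatorname{supp} \mathbb{P}]$. Then $d_{f,g}(t) < t$ for all $t \in (0, |I|]$. -/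
open MeasureTheory Set Filter Topology

noncomputable section

/-- The topological support of a Borel measure on `ℝ`. -/
def msupp (mu : Measure ℝ) : Set ℝ := {x | ∀ ε > 0, 0 < mu (Metric.ball x ε)}

/-- Infimum of the support. -/
def suppInf (mu : Measure ℝ) : ℝ := sInf (msupp mu)

/-- Supremum of the support. -/
def suppSup (mu : Measure ℝ) : ℝ := sSup (msupp mu)

/-- `γ(P) = [inf supp P, sup supp P]`. -/
def gammaSet (mu : Measure ℝ) : Set ℝ := Icc (suppInf mu) (suppSup mu)

/-- `|γ(P)|`, the diameter of the support. -/
def gammaLen (mu : Measure ℝ) : ℝ := suppSup mu - suppInf mu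

/-- `P ∈ 𝒫(I)`: a compactly supported Borel probability measure concentrated on `I`. -/
def IsCSP (I : Set ℝ) (mu : Measure ℝ) : Prop :=
  IsProbabilityMeasure mu ∧ mu Iᶜ = 0 ∧ IsCompact (closure (msupp mu))

/-- `f ∈ CM(I)`: continuous and strictly monotone on `I`. -/
def CM (f : ℝ → ℝ) (I : Set ℝ) : Prop :=
  ContinuousOn f I ∧ (StrictMonoOn f I ∨ StrictAntiOn f I)

/-- The integral quasiarithmetic mean `𝒜_f(P) = f⁻¹(∫ f dP)` (inverse taken on `I`). -/
def QAM (f : ℝ → ℝ) (I : Set ℝ) (mu : Measure ℝ) : ℝ :=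
  Function.invFunOn f I (∫ t, f t ∂mu)

/-- The Lebesgue σ-algebra on `ℝ` (completion of the Borel σ-algebra w.r.t. Lebesgue measure). -/
def Leb : MeasurableSpace ℝ where
  MeasurableSet' s := NullMeasurableSet s (volume : Measure ℝ)
  measurableSet_empty := MeasurableSet.empty.nullMeasurableSet
  measurableSet_compl := fun _ hs => hs.compl
  measurableSet_iUnion := fun _ hf => NullMeasurableSet.iUnion hf

/-- An admissible family `(f_x)_{x∈[0,1]}`: each `f_x` continuous and strictly monotone on `I`,
and `(t,x) ↦ f_x(t)` measurable w.r.t. the product of the Borel σ-algebra and the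
Lebesgue σ-algebra. -/
def Admissible (F : ℝ → ℝ → ℝ) (I : Set ℝ) : Prop :=
  (∀ x ∈ Icc (0:ℝ) 1, CM (F x) I) ∧
  Measurable[(inferInstance : MeasurableSpace ℝ).prod Leb] (fun p : ℝ × ℝ => F p.2 p.1)

/-- `𝐀_𝓕(P)`: the distribution of `x ↦ 𝒜_{f_x}(P)` under Lebesgue measure on `[0,1]`. -/
def AF (F : ℝ → ℝ → ℝ) (I : Set ℝ) (mu : Measure ℝ) : Measure ℝ :=
  Measure.map (fun x => QAM (F x) I mu) ((volume : Measure ℝ).restrict (Icc 0 1))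

/-- Iterates of `𝐀_𝓕`. -/
def AFiter (F : ℝ → ℝ → ℝ) (I : Set ℝ) (n : ℕ) (mu : Measure ℝ) : Measure ℝ :=
  (AF F I)^[n] mu

/-- A mean on `𝒫(I)`: `M(P) ∈ γ(P)`. -/
def IsMean (I : Set ℝ) (M : Measure ℝ → ℝ) : Prop :=
  ∀ mu : Measure ℝ, IsCSP I mu → M mu ∈ gammaSet mu

/-- `M` is `𝐀_𝓕`-invariant: `M ∘ 𝐀_𝓕 = M` on `𝒫(I)`. -/
def IsInvariantMean (F : ℝ → ℝ → ℝ) (I : Set ℝ) (M : Measure ℝ → ℝ) : Prop :=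
  ∀ mu : Measure ℝ, IsCSP I mu → M (AF F I mu) = M mu

/-- The lower invariant mean `𝓛_𝓕`. -/
def LF (F : ℝ → ℝ → ℝ) (I : Set ℝ) (mu : Measure ℝ) : ℝ :=
  ⨆ n, suppInf (AFiter F I n mu)

/-- The upper invariant mean `𝓤_𝓕`. -/
def UF (F : ℝ → ℝ → ℝ) (I : Set ℝ) (mu : Measure ℝ) : ℝ :=
  ⨅ n, suppSup (AFiter F I n mu)

/-- Variance of a measure on `ℝ`. -/
def Var (mu : Measure ℝ) : ℝ := (∫ x, x ^ 2 ∂mu) - (∫ x, x ∂mu) ^ 2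

/-- The two-point measure `θ·δ_x + (1-θ)·δ_y`. -/
def twoPt (x y θ : ℝ) : Measure ℝ :=
  ENNReal.ofReal θ • Measure.dirac x + ENNReal.ofReal (1 - θ) • Measure.dirac y


lemma msupp_compl_null (μ : Measure ℝ) : μ (msupp μ)ᶜ = 0 := by
  refine measure_null_of_locally_null _ fun x hx => ?_
  simp only [msupp, mem_compl_iff, mem_ofPred_eq, not_forall, not_lt, nonpos_iff_eq_zero] at hx
  obtain ⟨ε, hε, h⟩ := hx
  exact ⟨Metric.ball x ε, mem_nhdsWithin_of_mem_nhds (Metric.ball_mem_nhds x hε), h⟩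

lemma msupp_subset_of_compl_null {μ : Measure ℝ} {s : Set ℝ} (hs : IsClosed s)
    (h : μ sᶜ = 0) : msupp μ ⊆ s := by
  intro x hx
  by_contra hxs
  obtain ⟨ε, hε, hball⟩ := Metric.isOpen_iff.1 hs.isOpen_compl x hxs
  exact (hx ε hε).ne' (measure_mono_null hball h)

lemma msupp_nonempty (μ : Measure ℝ) [IsProbabilityMeasure μ] : (msupp μ).Nonempty := by
  by_contra h
  have := msupp_compl_null μ
  rw [not_nonempty_iff_eq_empty.1 h, compl_empty] at this
  simp at this

namespace IsCSP

variable {a b : ℝ} {μ : Measure ℝ}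

lemma gammaSet_subset (h : IsCSP (Icc a b) μ) : gammaSet μ ⊆ Icc a b := by
  have := h.1
  have hsub := msupp_subset_of_compl_null isClosed_Icc h.2.1
  exact Icc_subset_Icc (le_csInf (msupp_nonempty μ) fun x hx => (hsub hx).1)
    (csSup_le (msupp_nonempty μ) fun x hx => (hsub hx).2)

lemma ae_mem_gammaSet (h : IsCSP (Icc a b) μ) : ∀ᵐ x ∂μ, x ∈ gammaSet μ := by
  have hsub := msupp_subset_of_compl_null isClosed_Icc h.2.1
  refine measure_mono_null (compl_subset_compl.2 fun x hx => ⟨?_, ?_⟩) (msupp_compl_null μ)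
  · exact csInf_le ⟨a, fun y hy => (hsub hy).1⟩ hx
  · exact le_csSup ⟨b, fun y hy => (hsub hy).2⟩ hx

end IsCSP

lemma CM.injOn {f : ℝ → ℝ} {I : Set ℝ} (hf : CM f I) : InjOn f I :=
  hf.2.elim StrictMonoOn.injOn StrictAntiOn.injOn

lemma CM.exists_strictMonoOn {f : ℝ → ℝ} {I : Set ℝ} (hf : CM f I) :
    ∃ f₁ : ℝ → ℝ, ContinuousOn f₁ I ∧ StrictMonoOn f₁ I ∧
      ∀ (μ : Measure ℝ) (x : ℝ), f x = ∫ y, f y ∂μ → f₁ x = ∫ y, f₁ y ∂μ := by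
  obtain ⟨hfc, hm | hm⟩ := hf
  · exact ⟨f, hfc, hm, fun _ _ h => h⟩
  · refine ⟨-f, hfc.neg, fun x hx y hy hxy => neg_lt_neg (hm hx hy hxy), fun μ x h => ?_⟩
    simp only [Pi.neg_apply, integral_neg, h]

section Integral

variable {μ : Measure ℝ} {f : ℝ → ℝ}

lemma ContinuousOn.integrable_of_ae_mem [IsFiniteMeasure μ] {K : Set ℝ} (hK : IsCompact K)
    (hf : ContinuousOn f K) (hμ : ∀ᵐ x ∂μ, x ∈ K) : Integrable f μ := by
  rw [← Measure.restrict_eq_self_of_ae_mem hμ]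
  exact hf.integrableOn_compact hK

lemma integral_mem_image_of_ae_mem [IsProbabilityMeasure μ] {K : Set ℝ} (hK : IsCompact K)
    (hK' : IsPreconnected K) (hf : ContinuousOn f K) (hμ : ∀ᵐ x ∂μ, x ∈ K) :
    ∫ x, f x ∂μ ∈ f '' K :=
  (hK'.image f hf).convex.integral_mem (hK.image_of_continuousOn hf).isClosed
    (hμ.mono fun _ hx => mem_image_of_mem f hx) (hf.integrable_of_ae_mem hK hμ)

lemma QAM_mem_of_ae_mem [IsProbabilityMeasure μ] {I K : Set ℝ} (hinj : InjOn f I) (hKI : K ⊆ I)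
    (hK : IsCompact K) (hK' : IsPreconnected K) (hf : ContinuousOn f K) (hμ : ∀ᵐ x ∂μ, x ∈ K) :
    QAM f I μ ∈ K ∧ f (QAM f I μ) = ∫ x, f x ∂μ := by
  obtain ⟨x, hxK, hx⟩ := integral_mem_image_of_ae_mem hK hK' hf hμ
  have hex : ∃ y ∈ I, f y = ∫ x, f x ∂μ := ⟨x, hKI hxK, hx⟩
  have hQ : QAM f I μ = x :=
    hinj (Function.invFunOn_mem hex) (hKI hxK) ((Function.invFunOn_eq hex).trans hx.symm)
  exact ⟨hQ ▸ hxK, Function.invFunOn_eq hex⟩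

variable [IsProbabilityMeasure μ] {α β s : ℝ}

lemma measureReal_Icc_mul_le_sub_integral (hfc : ContinuousOn f (Icc α β))
    (hf : MonotoneOn f (Icc α β)) (hμ : ∀ᵐ x ∂μ, x ∈ Icc α β) (hs : s ∈ Icc α β) :
    μ.real (Icc α s) * (f β - f s) ≤ f β - ∫ x, f x ∂μ := by
  have hβ : β ∈ Icc α β := ⟨hs.1.trans hs.2, le_rfl⟩
  have hint := hfc.integrable_of_ae_mem isCompact_Icc hμ
  have hmarkov := mul_meas_ge_le_integral_of_nonneg (μ := μ) (f := fun x => f β - f x)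
    (hμ.mono fun x hx => sub_nonneg.2 (hf hx hβ hx.2)) ((integrable_const _).sub hint) (f β - f s)
  have hsub : Icc α s ⊆ {x | f β - f s ≤ f β - f x} := fun x hx =>
    sub_le_sub_left (hf ⟨hx.1, hx.2.trans hs.2⟩ hs hx.2) _
  rw [integral_sub (integrable_const _) hint, integral_const, probReal_univ, one_smul] at hmarkov
  calc μ.real (Icc α s) * (f β - f s) ≤ (f β - f s) * μ.real {x | f β - f s ≤ f β - f x} := by
        rw [mul_comm]
        exact mul_le_mul_of_nonneg_left (measureReal_mono hsub) (sub_nonneg.2 (hf hs hβ hs.2))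
    _ ≤ f β - ∫ x, f x ∂μ := hmarkov

lemma measureReal_Icc_mul_le_integral_sub (hfc : ContinuousOn f (Icc α β))
    (hf : MonotoneOn f (Icc α β)) (hμ : ∀ᵐ x ∂μ, x ∈ Icc α β) (hs : s ∈ Icc α β) :
    μ.real (Icc s β) * (f s - f α) ≤ (∫ x, f x ∂μ) - f α := by
  have hα : α ∈ Icc α β := ⟨le_rfl, hs.1.trans hs.2⟩
  have hint := hfc.integrable_of_ae_mem isCompact_Icc hμ
  have hmarkov := mul_meas_ge_le_integral_of_nonneg (μ := μ) (f := fun x => f x - f α)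
    (hμ.mono fun x hx => sub_nonneg.2 (hf hα hx hx.1)) (hint.sub (integrable_const _)) (f s - f α)
  have hsub : Icc s β ⊆ {x | f s - f α ≤ f x - f α} := fun x hx =>
    sub_le_sub_right (hf hs ⟨hs.1.trans hx.1, hx.2⟩ hx.1) _
  rw [integral_sub hint (integrable_const _), integral_const, probReal_univ, one_smul] at hmarkov
  calc μ.real (Icc s β) * (f s - f α) ≤ (f s - f α) * μ.real {x | f s - f α ≤ f x - f α} := by
        rw [mul_comm]
        exact mul_le_mul_of_nonneg_left (measureReal_mono hsub) (sub_nonneg.2 (hf hα hs hs.1))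
    _ ≤ (∫ x, f x ∂μ) - f α := hmarkov

lemma one_le_measureReal_Icc_add {s' : ℝ} (hμ : ∀ᵐ x ∂μ, x ∈ Icc α β) (hs : s' ≤ s) :
    1 ≤ μ.real (Icc α s) + μ.real (Icc s' β) := by
  have hcover : Icc α β ⊆ Icc α s ∪ Icc s' β := fun x hx =>
    (le_total x s).imp (fun h => ⟨hx.1, h⟩) (fun h => ⟨hs.trans h, hx.2⟩)
  have hfull : μ (Icc α β) = 1 := (prob_compl_eq_zero_iff measurableSet_Icc).1 hμ
  calc (1 : ℝ) = μ.real (Icc α β) := by rw [measureReal_def, hfull, ENNReal.toReal_one]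
    _ ≤ μ.real (Icc α s ∪ Icc s' β) := measureReal_mono hcover
    _ ≤ _ := measureReal_union_le _ _

end Integral

lemma StrictMonoOn.exists_pos_le_sub {a b ε : ℝ} {f : ℝ → ℝ} (hfc : ContinuousOn f (Icc a b))
    (hf : StrictMonoOn f (Icc a b)) (hε : 0 < ε) :
    ∃ c > 0, ∀ u ∈ Icc a b, ∀ v ∈ Icc a b, u + ε ≤ v → c ≤ f v - f u := by
  by_cases hab : a + ε ≤ b
  · have hshift : MapsTo (· - ε) (Icc (a + ε) b) (Icc a b) := fun v hv =>
      ⟨by linarith [hv.1], by linarith [hv.2]⟩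
    have hIcc : Icc (a + ε) b ⊆ Icc a b := Icc_subset_Icc (by linarith) le_rfl
    obtain ⟨v₀, hv₀, hmin⟩ := isCompact_Icc.exists_isMinOn (nonempty_Icc.2 hab)
      ((hfc.mono hIcc).sub (hfc.comp (continuous_sub_right ε).continuousOn hshift))
    refine ⟨f v₀ - f (v₀ - ε), sub_pos.2 (hf (hshift hv₀) (hIcc hv₀) (by linarith)), ?_⟩
    intro u hu v hv huv
    have hv' : v ∈ Icc (a + ε) b := ⟨by linarith [hu.1], hv.2⟩
    have hmin_v : f v₀ - f (v₀ - ε) ≤ f v - f (v - ε) := hmin hv'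
    have hu_le : f u ≤ f (v - ε) := hf.monotoneOn hu (hshift hv') (by linarith)
    linarith
  · exact ⟨1, one_pos, fun u hu v hv huv => absurd (by linarith [hu.1, hv.2]) hab⟩

/-- If `A - B` were close to the length `t` of an interval `[α, β]` carrying `μ`, then `A` would
sit near `β` and `B` near `α`. Since `f` and `g` increase by a definite amount over any step of
length `t/3`, Markov's inequality then leaves less than half of the mass in each of the two
overlapping intervals `[α, β - t/3]` and `[α + t/3, β]`, which is absurd. -/
lemma exists_pos_sub_le_of_integral_eq {a b t : ℝ} {f g : ℝ → ℝ}
    (hfc : ContinuousOn f (Icc a b)) (hf : StrictMonoOn f (Icc a b))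
    (hgc : ContinuousOn g (Icc a b)) (hg : StrictMonoOn g (Icc a b)) (ht : 0 < t) :
    ∃ δ ∈ Ioc 0 t, ∀ (μ : Measure ℝ) [IsProbabilityMeasure μ] (α β A B : ℝ),
      Icc α β ⊆ Icc a b → β - α ≤ t → (∀ᵐ x ∂μ, x ∈ Icc α β) → A ∈ Icc α β → B ∈ Icc α β →
      f A = ∫ x, f x ∂μ → g B = ∫ x, g x ∂μ → A - B ≤ t - δ := by
  set ε := t / 3 with hε
  obtain ⟨cf, hcf, hgapf⟩ := hf.exists_pos_le_sub hfc (by positivity : 0 < ε)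
  obtain ⟨cg, hcg, hgapg⟩ := hg.exists_pos_le_sub hgc (by positivity : 0 < ε)
  obtain ⟨δf, hδf, hucf⟩ := Metric.uniformContinuousOn_iff.1
    (isCompact_Icc.uniformContinuousOn_of_continuous hfc) (cf / 2) (by positivity)
  obtain ⟨δg, hδg, hucg⟩ := Metric.uniformContinuousOn_iff.1
    (isCompact_Icc.uniformContinuousOn_of_continuous hgc) (cg / 2) (by positivity)
  set δ := min (min δf δg) ε
  have hδδf : δ ≤ δf := (min_le_left _ _).trans (min_le_left _ _)
  have hδδg : δ ≤ δg := (min_le_left _ _).trans (min_le_right _ _)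
  have hδε : δ ≤ ε := min_le_right _ _
  refine ⟨δ, ⟨by positivity, by linarith⟩, ?_⟩
  intro μ _ α β A B hsub hlen hμ hA hB hfA hgB
  by_contra! hAB
  have hαβ : α ≤ β := hA.1.trans hA.2
  have hα : α ∈ Icc a b := hsub ⟨le_rfl, hαβ⟩
  have hβ : β ∈ Icc a b := hsub ⟨hαβ, le_rfl⟩
  have hfA_near : f β - f A < cf / 2 := by
    have := hucf β hβ A (hsub hA) (by
      rw [Real.dist_eq, abs_of_nonneg (by linarith [hA.2])]; linarith [hB.1])
    linarith [le_abs_self (f β - f A), Real.dist_eq (f β) (f A)]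
  have hgB_near : g B - g α < cg / 2 := by
    have := hucg B (hsub hB) α hα (by
      rw [Real.dist_eq, abs_of_nonneg (by linarith [hB.1])]; linarith [hA.2])
    linarith [le_abs_self (g B - g α), Real.dist_eq (g B) (g α)]
  have hs_top : β - ε ∈ Icc α β := ⟨by linarith [hA.2, hB.1], by linarith⟩
  have hs_bot : α + ε ∈ Icc α β := ⟨by linarith, by linarith [hA.2, hB.1]⟩
  have htop := measureReal_Icc_mul_le_sub_integral (hfc.mono hsub) (hf.monotoneOn.mono hsub) hμ
    hs_top
  have hbot := measureReal_Icc_mul_le_integral_sub (hgc.mono hsub) (hg.monotoneOn.mono hsub) hμ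
    hs_bot
  have hstep_f : cf ≤ f β - f (β - ε) := hgapf _ (hsub hs_top) _ hβ (by linarith)
  have hstep_g : cg ≤ g (α + ε) - g α := hgapg _ hα _ (hsub hs_bot) le_rfl
  have hmass_top : μ.real (Icc α (β - ε)) < 1 / 2 := by
    nlinarith [measureReal_nonneg (μ := μ) (s := Icc α (β - ε))]
  have hmass_bot : μ.real (Icc (α + ε) β) < 1 / 2 := by
    nlinarith [measureReal_nonneg (μ := μ) (s := Icc (α + ε) β)]
  linarith [one_le_measureReal_Icc_add hμ (show α + ε ≤ β - ε by linarith [hA.2, hB.1])]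

theorem stmt0_general (a b : ℝ) (f g : ℝ → ℝ)
    (hf : CM f (Icc a b)) (hg : CM g (Icc a b))
    (t : ℝ) (ht0 : 0 < t) :
    sSup {d : ℝ | ∃ mu : Measure ℝ, IsCSP (Icc a b) mu ∧ gammaLen mu ≤ t ∧
        d = |QAM f (Icc a b) mu - QAM g (Icc a b) mu|} < t := by
  obtain ⟨f₁, hf₁c, hf₁, hf₁_eq⟩ := hf.exists_strictMonoOn
  obtain ⟨g₁, hg₁c, hg₁, hg₁_eq⟩ := hg.exists_strictMonoOn
  obtain ⟨δ₁, hδ₁, hfg⟩ := exists_pos_sub_le_of_integral_eq hf₁c hf₁ hg₁c hg₁ ht0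
  obtain ⟨δ₂, hδ₂, hgf⟩ := exists_pos_sub_le_of_integral_eq hg₁c hg₁ hf₁c hf₁ ht0
  refine (Real.sSup_le ?_ ?_).trans_lt (sub_lt_self t (lt_min hδ₁.1 hδ₂.1))
  · rintro d ⟨μ, hμ, hlen, rfl⟩
    have := hμ.1
    have hsub := hμ.gammaSet_subset
    have hae := hμ.ae_mem_gammaSet
    obtain ⟨hA, hfA⟩ := QAM_mem_of_ae_mem hf.injOn hsub isCompact_Icc isPreconnected_Icc
      (hf.1.mono hsub) hae
    obtain ⟨hB, hgB⟩ := QAM_mem_of_ae_mem hg.injOn hsub isCompact_Icc isPreconnected_Icc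
      (hg.1.mono hsub) hae
    have h₁ := hfg μ _ _ _ _ hsub hlen hae hA hB (hf₁_eq μ _ hfA) (hg₁_eq μ _ hgB)
    have h₂ := hgf μ _ _ _ _ hsub hlen hae hB hA (hg₁_eq μ _ hgB) (hf₁_eq μ _ hfA)
    rw [abs_sub_le_iff]
    constructor <;> linarith [min_le_left δ₁ δ₂, min_le_right δ₁ δ₂]
  · linarith [min_le_left δ₁ δ₂, hδ₁.2]

theorem stmt0 (a b : ℝ) (hab : a < b) (f g : ℝ → ℝ)
    (hf : CM f (Icc a b)) (hg : CM g (Icc a b))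
    (t : ℝ) (ht0 : 0 < t) (ht1 : t ≤ b - a) :
    sSup {d : ℝ | ∃ mu : Measure ℝ, IsCSP (Icc a b) mu ∧ gammaLen mu ≤ t ∧
        d = |QAM f (Icc a b) mu - QAM g (Icc a b) mu|} < t :=
  stmt0_general a b f g hf hg t ht0
end
end

section
/- Let $I$ be a compact interval, $f, g : I \to \mathbb{R}$ continuous strictly monotone, and for $x, y \in I$, $\theta \in [0,1]$ define $m(x,y,\theta) := |\mathscr{A}_f(\theta\delta_x + (1-\theta)\delta_y) - \mathscr{A}_g(\theta\delta_x + (1-\theta)\delta_y)|$. Then $m$ is continuous on $I \times I \times [0,1]$, and $m(x,y,\theta) < |x-y|$ for all $x, y \in I$ with $x \ne y$ and all $\theta \in [0,1]$. -/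
open MeasureTheory Set Filter Topology

noncomputable section

lemma integrable_dirac'' (f : ℝ → ℝ) (x : ℝ) : Integrable f (Measure.dirac x) := by
  have h : f =ᵐ[Measure.dirac x] fun _ => f x := by
    rw [ae_dirac_eq]; exact Filter.eventually_pure.mpr rfl
  exact (integrable_const (f x)).congr h.symm

lemma integral_twoPt' (f : ℝ → ℝ) (x y θ : ℝ) (hθ : θ ∈ Icc (0:ℝ) 1) :
    ∫ t, f t ∂(twoPt x y θ) = θ * f x + (1 - θ) * f y := by
  rw [twoPt, integral_add_measure
      ((integrable_dirac'' f x).smul_measure ENNReal.ofReal_ne_top)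
      ((integrable_dirac'' f y).smul_measure ENNReal.ofReal_ne_top),
    integral_smul_measure, integral_smul_measure, integral_dirac, integral_dirac,
    ENNReal.toReal_ofReal hθ.1, ENNReal.toReal_ofReal (by linarith [hθ.2])]
  simp only [smul_eq_mul]

lemma continuousOn_invFunOn' {s : Set ℝ} (hs : IsCompact s) {f : ℝ → ℝ}
    (hfc : ContinuousOn f s) (hfi : Set.InjOn f s) :
    ContinuousOn (Function.invFunOn f s) (f '' s) := by
  rintro v ⟨t, hts, rfl⟩
  have hgt : Function.invFunOn f s (f t) = t :=
    hfi (Function.invFunOn_mem ⟨t, hts, rfl⟩) hts (Function.invFunOn_eq ⟨t, hts, rfl⟩)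
  rw [ContinuousWithinAt, hgt]
  intro U hU
  rw [mem_map, mem_nhdsWithin]
  obtain ⟨U', hU'U, hU'o, htU'⟩ := mem_nhds_iff.mp hU
  have hcomp : IsCompact (f '' (s \ U')) :=
    (hs.diff hU'o).image_of_continuousOn (hfc.mono diff_subset)
  refine ⟨(f '' (s \ U'))ᶜ, hcomp.isClosed.isOpen_compl, ?_, ?_⟩
  · rintro ⟨u, ⟨hus, huU'⟩, hfu⟩
    exact huU' (hfi hus hts hfu ▸ htU')
  · rintro w ⟨hwO, u, hus, rfl⟩
    have h1 : Function.invFunOn f s (f u) ∈ s := Function.invFunOn_mem ⟨u, hus, rfl⟩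
    have h2 : f (Function.invFunOn f s (f u)) = f u := Function.invFunOn_eq ⟨u, hus, rfl⟩
    apply hU'U
    by_contra hni
    exact hwO ⟨_, ⟨h1, hni⟩, h2⟩

lemma comb_mem_uIcc {u v θ : ℝ} (hθ : θ ∈ Icc (0:ℝ) 1) :
    θ * u + (1 - θ) * v ∈ uIcc u v := by
  rw [← segment_eq_uIcc]
  exact ⟨θ, 1 - θ, hθ.1, by linarith [hθ.2], by ring, by simp [smul_eq_mul]⟩

lemma qam_spec {a b : ℝ} (f : ℝ → ℝ) (hf : CM f (Icc a b))
    {x y θ : ℝ} (hx : x ∈ Icc a b) (hy : y ∈ Icc a b) (hθ : θ ∈ Icc (0:ℝ) 1) :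
    QAM f (Icc a b) (twoPt x y θ) ∈ uIcc x y ∧
    f (QAM f (Icc a b) (twoPt x y θ)) = θ * f x + (1 - θ) * f y := by
  have hinj : Set.InjOn f (Icc a b) := hf.2.elim StrictMonoOn.injOn StrictAntiOn.injOn
  have hsub : uIcc x y ⊆ Icc a b := uIcc_subset_Icc hx hy
  obtain ⟨t, ht, hft⟩ := intermediate_value_uIcc (hf.1.mono hsub) (comb_mem_uIcc hθ)
  have hmem : ∃ u ∈ Icc a b, f u = θ * f x + (1 - θ) * f y := ⟨t, hsub ht, hft⟩
  have hQ : f (QAM f (Icc a b) (twoPt x y θ)) = θ * f x + (1 - θ) * f y := by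
    rw [QAM, integral_twoPt' f x y θ hθ]; exact Function.invFunOn_eq hmem
  have hQs : QAM f (Icc a b) (twoPt x y θ) ∈ Icc a b := by
    rw [QAM, integral_twoPt' f x y θ hθ]; exact Function.invFunOn_mem hmem
  have heq : QAM f (Icc a b) (twoPt x y θ) = t := hinj hQs (hsub ht) (by rw [hQ, hft])
  exact ⟨heq ▸ ht, hQ⟩

lemma qam_contOn {a b : ℝ} (f : ℝ → ℝ) (hf : CM f (Icc a b)) :
    ContinuousOn (fun p : ℝ × ℝ × ℝ => QAM f (Icc a b) (twoPt p.1 p.2.1 p.2.2))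
      ((Icc a b) ×ˢ (Icc a b) ×ˢ (Icc (0:ℝ) 1)) := by
  have hinj : Set.InjOn f (Icc a b) := hf.2.elim StrictMonoOn.injOn StrictAntiOn.injOn
  set v : ℝ × ℝ × ℝ → ℝ := fun p => p.2.2 * f p.1 + (1 - p.2.2) * f p.2.1 with hv
  have hcv : ContinuousOn v ((Icc a b) ×ˢ (Icc a b) ×ˢ (Icc (0:ℝ) 1)) := by
    apply ContinuousOn.add
    · exact (continuous_snd.snd.continuousOn).mul
        (hf.1.comp continuous_fst.continuousOn (fun p hp => hp.1))
    · exact ((continuous_const.sub continuous_snd.snd).continuousOn).mul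
        (hf.1.comp (continuous_fst.comp continuous_snd).continuousOn (fun p hp => hp.2.1))
  have hmaps : Set.MapsTo v ((Icc a b) ×ˢ (Icc a b) ×ˢ (Icc (0:ℝ) 1)) (f '' Icc a b) := by
    intro p hp
    have hsub : uIcc p.1 p.2.1 ⊆ Icc a b := uIcc_subset_Icc hp.1 hp.2.1
    exact image_mono (f := f) hsub
      (intermediate_value_uIcc (hf.1.mono hsub) (comb_mem_uIcc hp.2.2))
  refine ContinuousOn.congr
    ((continuousOn_invFunOn' isCompact_Icc hf.1 hinj).comp hcv hmaps) fun p hp => ?_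
  show QAM f (Icc a b) (twoPt p.1 p.2.1 p.2.2) = Function.invFunOn f (Icc a b) (v p)
  rw [QAM, integral_twoPt' _ _ _ _ hp.2.2]

theorem stmt3 (a b : ℝ) (hab : a < b) (f g : ℝ → ℝ)
    (hf : CM f (Icc a b)) (hg : CM g (Icc a b)) :
    ContinuousOn (fun p : ℝ × ℝ × ℝ =>
        |QAM f (Icc a b) (twoPt p.1 p.2.1 p.2.2) - QAM g (Icc a b) (twoPt p.1 p.2.1 p.2.2)|)
      ((Icc a b) ×ˢ (Icc a b) ×ˢ (Icc (0:ℝ) 1)) ∧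
    ∀ x ∈ Icc a b, ∀ y ∈ Icc a b, ∀ θ ∈ Icc (0:ℝ) 1, x ≠ y →
      |QAM f (Icc a b) (twoPt x y θ) - QAM g (Icc a b) (twoPt x y θ)| < |x - y| := by
  constructor
  · exact ((qam_contOn f hf).sub (qam_contOn g hg)).abs
  · intro x hx y hy θ hθ hxy
    have hinjf : Set.InjOn f (Icc a b) := hf.2.elim StrictMonoOn.injOn StrictAntiOn.injOn
    have hinjg : Set.InjOn g (Icc a b) := hg.2.elim StrictMonoOn.injOn StrictAntiOn.injOn
    have hsub : uIcc x y ⊆ Icc a b := uIcc_subset_Icc hx hy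
    obtain ⟨hAf, hQf⟩ := qam_spec f hf hx hy hθ
    obtain ⟨hAg, hQg⟩ := qam_spec g hg hx hy hθ
    set tA := QAM f (Icc a b) (twoPt x y θ)
    set tB := QAM g (Icc a b) (twoPt x y θ)
    have habs : |x - y| = x ⊔ y - x ⊓ y := by
      rcases le_total x y with h | h
      · rw [abs_of_nonpos (by linarith), sup_eq_right.mpr h, inf_eq_left.mpr h]; ring
      · rw [abs_of_nonneg (by linarith), sup_eq_left.mpr h, inf_eq_right.mpr h]
    have hxypos : (0:ℝ) < |x - y| := abs_pos.mpr (sub_ne_zero.mpr hxy)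
    by_cases h0 : θ = 0
    · have hA : tA = y := hinjf (hsub hAf) hy (by rw [hQf, h0]; ring)
      have hB : tB = y := hinjg (hsub hAg) hy (by rw [hQg, h0]; ring)
      rw [hA, hB, sub_self, abs_zero]; exact hxypos
    by_cases h1 : θ = 1
    · have hA : tA = x := hinjf (hsub hAf) hx (by rw [hQf, h1]; ring)
      have hB : tB = x := hinjg (hsub hAg) hx (by rw [hQg, h1]; ring)
      rw [hA, hB, sub_self, abs_zero]; exact hxypos
    · have hθ0 : 0 < θ := lt_of_le_of_ne hθ.1 (Ne.symm h0)
      have hθ1 : θ < 1 := lt_of_le_of_ne hθ.2 h1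
      have key : ∀ (h : ℝ → ℝ), Set.InjOn h (Icc a b) →
          ∀ t, t ∈ uIcc x y → h t = θ * h x + (1 - θ) * h y →
          x ⊓ y < t ∧ t < x ⊔ y := by
        intro h hinj t ht hht
        have hne : h x ≠ h y := fun he => hxy (hinj hx hy he)
        have htx : t ≠ x := by
          intro he
          rw [he] at hht
          apply hne
          have : (1 - θ) * (h x - h y) = 0 := by linarith
          rcases mul_eq_zero.mp this with h' | h'
          · exact absurd h' (by intro hc; linarith)
          · linarith
        have hty : t ≠ y := by
          intro he
          rw [he] at hht
          apply hne
          have : θ * (h x - h y) = 0 := by linarith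
          rcases mul_eq_zero.mp this with h' | h'
          · exact absurd h' (by intro hc; linarith)
          · linarith
        constructor
        · refine lt_of_le_of_ne ht.1 ?_
          rcases min_choice x y with hm | hm <;> rw [hm] <;>
            [exact fun he => htx he.symm; exact fun he => hty he.symm]
        · refine lt_of_le_of_ne ht.2 ?_
          rcases max_choice x y with hm | hm <;> rw [hm] <;> [exact htx; exact hty]
      obtain ⟨hA1, hA2⟩ := key f hinjf tA hAf hQf
      obtain ⟨hB1, hB2⟩ := key g hinjg tB hAg hQg
      rw [habs, abs_sub_lt_iff]
      constructor <;> linarith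
end
end

section
/- Let $I$ be an interval, $(f_x)_{x\in[0,1]}$ a family of continuous strictly monotone functions $f_x : I \to \mathbb{R}$ such that the map $(t,x) \mapsto f_x(t)$ is measurable with respect to the product of the Borel $\sigma$-algebra on $I$ and the Lebesgue $\sigma$-algebra on $[0,1]$. Then for every compactly supported Borel probability measure $\mathbb{P}$ on $I$, the function $x \mapsto \mathscr{A}_{f_x}(\mathbb{P})$ is Lebesgue measurable on $[0,1]$. -/
open MeasureTheory Set Filter Topology

noncomputable section

/-! The mean is `invFunOn (F x) I (h x)` with `h x = ∫ t, F x t ∂μ`, which is measurable in `x`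
by Fubini. Replacing `F x` and `h x` by their negatives on the measurable set of `x` where `F x`
decreases reduces everything to increasing `F x`. Take a countable `D ⊆ I` approaching every point
of `I` from both sides (the rational points of `I` and its endpoints). Then `h x ∈ F x '' I` iff
`F x d ≤ h x ≤ F x d'` for some `d, d' ∈ D`, and in that case the mean is `< c` iff `h x ≤ F x d`
for some `d ∈ D` with `d < c`; both conditions are countable unions of measurable sets. -/

open Function

theorem Function.Injective.invFunOn_comp {α β γ : Type*} [Nonempty α] {e : β → γ}
    (he : Injective e) (f : α → β) (s : Set α) (b : β) :
    invFunOn (e ∘ f) s (e b) = invFunOn f s b := by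
  have hp : (fun a => a ∈ s ∧ (e ∘ f) a = e b) = fun a => a ∈ s ∧ f a = b := by
    simp only [comp_apply, he.eq_iff]
  unfold invFunOn
  rw [hp]

def IsSidedDenseIn (D I : Set ℝ) : Prop :=
  D ⊆ I ∧ (∀ a ∈ I, ∀ c, a < c → ∃ d ∈ D, a ≤ d ∧ d < c) ∧
    ∀ a ∈ I, ∀ c, c < a → ∃ d ∈ D, c < d ∧ d ≤ a

theorem exists_countable_isSidedDenseIn {I : Set ℝ} (hI : I.OrdConnected) :
    ∃ D : Set ℝ, D.Countable ∧ IsSidedDenseIn D I := by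
  refine ⟨(I ∩ range ((↑) : ℚ → ℝ)) ∪ {a | IsGreatest I a} ∪ {a | IsLeast I a}, ?_, ?_, ?_, ?_⟩
  · have hmax : {a | IsGreatest I a}.Subsingleton := fun _ ha _ hb => ha.unique hb
    have hmin : {a | IsLeast I a}.Subsingleton := fun _ ha _ hb => ha.unique hb
    exact (((countable_range _).mono inter_subset_right).union hmax.countable).union
      hmin.countable
  · rintro d ((⟨hd, -⟩ | hd) | hd)
    exacts [hd, hd.1, hd.1]
  · intro a ha c hac
    by_cases hmax : IsGreatest I a
    · exact ⟨a, .inl (.inr hmax), le_rfl, hac⟩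
    obtain ⟨b, hb, hab⟩ : ∃ b ∈ I, a < b := by
      simpa [IsGreatest, ha, upperBounds] using hmax
    obtain ⟨q, haq, hq⟩ := exists_rat_btwn (lt_min hab hac)
    have hqI : (q : ℝ) ∈ I := hI.out ha hb ⟨haq.le, (hq.trans_le (min_le_left _ _)).le⟩
    exact ⟨q, .inl (.inl ⟨hqI, q, rfl⟩), haq.le, hq.trans_le (min_le_right _ _)⟩
  · intro a ha c hca
    by_cases hmin : IsLeast I a
    · exact ⟨a, .inr hmin, hca, le_rfl⟩
    obtain ⟨b, hb, hba⟩ : ∃ b ∈ I, b < a := by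
      simpa [IsLeast, ha, lowerBounds] using hmin
    obtain ⟨q, hq, hqa⟩ := exists_rat_btwn (max_lt hba hca)
    have hqI : (q : ℝ) ∈ I := hI.out hb ha ⟨((le_max_left _ _).trans_lt hq).le, hqa.le⟩
    exact ⟨q, .inl (.inl ⟨hqI, q, rfl⟩), (le_max_right _ _).trans_lt hq, hqa.le⟩

namespace IsSidedDenseIn

variable {D I : Set ℝ} {f : ℝ → ℝ} {y : ℝ}

theorem exists_eq_iff (hD : IsSidedDenseIn D I) (hI : I.OrdConnected)
    (hfc : ContinuousOn f I) (hf : StrictMonoOn f I) :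
    (∃ a ∈ I, f a = y) ↔ (∃ d ∈ D, f d ≤ y) ∧ ∃ d ∈ D, y ≤ f d := by
  constructor
  · rintro ⟨a, ha, rfl⟩
    obtain ⟨d₁, hd₁, -, hd₁a⟩ := hD.2.2 a ha (a - 1) (by linarith)
    obtain ⟨d₂, hd₂, had₂, -⟩ := hD.2.1 a ha (a + 1) (by linarith)
    exact ⟨⟨d₁, hd₁, hf.monotoneOn (hD.1 hd₁) ha hd₁a⟩,
      d₂, hd₂, hf.monotoneOn ha (hD.1 hd₂) had₂⟩
  · rintro ⟨⟨d₁, hd₁, hfd₁⟩, d₂, hd₂, hfd₂⟩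
    have hsub : uIcc d₁ d₂ ⊆ I := hI.uIcc_subset (hD.1 hd₁) (hD.1 hd₂)
    obtain ⟨a, ha, hfa⟩ :=
      intermediate_value_uIcc (hfc.mono hsub) (mem_uIcc.mpr (.inl ⟨hfd₁, hfd₂⟩))
    exact ⟨a, hsub ha, hfa⟩

theorem invFunOn_lt_iff (hD : IsSidedDenseIn D I) (hf : StrictMonoOn f I)
    (hy : ∃ a ∈ I, f a = y) (c : ℝ) :
    invFunOn f I y < c ↔ ∃ d ∈ D, d < c ∧ y ≤ f d := by
  have hmem := invFunOn_mem hy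
  conv_rhs => rw [← invFunOn_eq hy]
  constructor
  · intro hlt
    obtain ⟨d, hd, had, hdc⟩ := hD.2.1 _ hmem c hlt
    exact ⟨d, hd, hdc, hf.monotoneOn hmem (hD.1 hd) had⟩
  · rintro ⟨d, hd, hdc, hfd⟩
    exact ((hf.le_iff_le hmem (hD.1 hd)).mp hfd).trans_lt hdc

end IsSidedDenseIn

section Measurability

variable {α : Type*} {m : MeasurableSpace α} {I : Set ℝ} {g : α → ℝ → ℝ} {y : α → ℝ}

theorem measurable_invFunOn_of_strictMonoOn (hI : I.OrdConnected)
    (hcont : ∀ x, ContinuousOn (g x) I) (hmono : ∀ x, StrictMonoOn (g x) I)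
    (hg : ∀ t, Measurable fun x => g x t) (hy : Measurable y) :
    Measurable fun x => invFunOn (g x) I (y x) := by
  obtain ⟨D, hDc, hD⟩ := exists_countable_isSidedDenseIn hI
  set E := {x | ∃ a ∈ I, g x a = y x} with hE_def
  have hE : MeasurableSet E := by
    have hE_eq : E = (⋃ d ∈ D, {x | g x d ≤ y x}) ∩ ⋃ d ∈ D, {x | y x ≤ g x d} := by
      ext x
      simpa only [hE_def, mem_inter_iff, mem_iUnion, mem_ofPred_eq, exists_prop]
        using hD.exists_eq_iff hI (hcont x) (hmono x)
    rw [hE_eq]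
    exact (MeasurableSet.biUnion hDc fun d _ => measurableSet_le (hg d) hy).inter
      (MeasurableSet.biUnion hDc fun d _ => measurableSet_le hy (hg d))
  refine measurable_of_Iio fun c => ?_
  -- off `E`, `invFunOn` returns the junk value `Classical.choice _`
  have hpre : (fun x => invFunOn (g x) I (y x)) ⁻¹' Iio c =
      (E ∩ ⋃ d ∈ D ∩ Iio c, {x | y x ≤ g x d}) ∪
        (Eᶜ ∩ {_x | Classical.choice (inferInstance : Nonempty ℝ) < c}) := by
    ext x
    by_cases hx : x ∈ E
    · simp [hx, hD.invFunOn_lt_iff (hmono x) hx, and_assoc]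
    · simp [hx, invFunOn_neg hx]
  rw [hpre]
  exact (hE.inter (MeasurableSet.biUnion (hDc.mono inter_subset_left)
    fun d _ => measurableSet_le hy (hg d))).union (hE.compl.inter (.const _))

theorem measurableSet_setOf_strictMonoOn
    (hmono : ∀ x, StrictMonoOn (g x) I ∨ StrictAntiOn (g x) I)
    (hg : ∀ t, Measurable fun x => g x t) :
    MeasurableSet {x | StrictMonoOn (g x) I} := by
  by_cases hI : ∃ t₁ ∈ I, ∃ t₂ ∈ I, t₁ < t₂
  · obtain ⟨t₁, ht₁, t₂, ht₂, hlt⟩ := hI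
    convert measurableSet_lt (hg t₁) (hg t₂) using 1
    ext x
    refine ⟨fun h => h ht₁ ht₂ hlt, fun h => (hmono x).resolve_right fun hanti => ?_⟩
    exact (hanti ht₁ ht₂ hlt).not_gt h
  · convert MeasurableSet.univ
    refine eq_univ_of_forall fun x t₁ ht₁ t₂ ht₂ hlt => ?_
    exact absurd ⟨t₁, ht₁, t₂, ht₂, hlt⟩ hI

theorem measurable_invFunOn (hI : I.OrdConnected)
    (hcont : ∀ x, ContinuousOn (g x) I)
    (hmono : ∀ x, StrictMonoOn (g x) I ∨ StrictAntiOn (g x) I)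
    (hg : ∀ t, Measurable fun x => g x t) (hy : Measurable y) :
    Measurable fun x => invFunOn (g x) I (y x) := by
  classical
  set M := {x | StrictMonoOn (g x) I}
  have hM : MeasurableSet M := measurableSet_setOf_strictMonoOn hmono hg
  have hflip : (fun x => invFunOn (g x) I (y x)) = fun x =>
      invFunOn (if x ∈ M then g x else Neg.neg ∘ g x) I (if x ∈ M then y x else -y x) := by
    ext x
    split_ifs
    · rfl
    · exact (neg_injective.invFunOn_comp (g x) I (y x)).symm
  rw [hflip]
  refine measurable_invFunOn_of_strictMonoOn hI (fun x => ?_) (fun x => ?_)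
    (fun t => ?_) (hy.ite hM hy.neg)
  · split_ifs
    exacts [hcont x, (hcont x).neg]
  · split_ifs with hx
    exacts [hx, ((hmono x).resolve_left hx).neg]
  · simp only [apply_ite (fun φ : ℝ → ℝ => φ t), comp_apply]
    exact (hg t).ite hM (hg t).neg

end Measurability

theorem stmt5 (I : Set ℝ) (hI : I.OrdConnected) (F : ℝ → ℝ → ℝ)
    (hF : Admissible F I) (mu : Measure ℝ) (hmu : IsCSP I mu) :
    Measurable[Leb.comap (Subtype.val : (Icc (0:ℝ) 1) → ℝ)]
      (fun x : Icc (0:ℝ) 1 => QAM (F x.1) I mu) := by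
  have : IsProbabilityMeasure mu := hmu.1
  obtain ⟨hCM, hprod⟩ := hF
  have hval := comap_measurable (m := Leb) (Subtype.val : Icc (0:ℝ) 1 → ℝ)
  have hsection : ∀ t, Measurable[Leb] fun x => F x t := fun t =>
    hprod.comp measurable_prodMk_left
  have hmean : Measurable[Leb] fun x => ∫ t, F x t ∂mu :=
    (@StronglyMeasurable.integral_prod_left' ℝ ℝ ℝ _ Leb mu _ _ _
      (fun p => F p.2 p.1) hprod.stronglyMeasurable).measurable
  exact measurable_invFunOn (m := Leb.comap Subtype.val) hI (fun x => (hCM x x.2).1)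
    (fun x => (hCM x x.2).2) (fun t => (hsection t).comp hval) (hmean.comp hval)
end
end

section
/- Let $I$ be a compact interval, $\mathcal{T}$ a finite set of continuous strictly monotone functions on $I$, and define $d(t) := \max_{l,u\in\mathcal{T}} \sup\{|\mathscr{A}_l(\mathbb{P}) - \mathscr{A}_u(\mathbb{P})| : \mathbb{P}\in\mathcal{P}(I), |\gamma(\mathbb{P})| \le t\}$ for $t \in (0,|I|]$. If $\mathcal{F}$ is an admissible family with $\mathscr{A}_{l_x} \le \mathscr{A}_{f_x} \le \mathscr{A}_{u_x}$ for some $l_x, u_x \in \mathcal{T}$ for each $x$, then $|\gamma(\mathbf{A}_\mathcal{F}(\mathbb{P}))| \le d(|\gamma(\mathbb{P})|)$ for every $\mathbb{P} \in \mathcal{P}(I)$ with $|\gamma(\mathbb{P})| > 0$. -/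
open MeasureTheory Set Filter Topology

noncomputable section

/-! Every value of `x ↦ 𝒜_{f_x}(P)` on `[0,1]` lies between `min_{l ∈ 𝒯} 𝒜_l(P)` and
`max_{u ∈ 𝒯} 𝒜_u(P)`, so the pushforward `𝐀_𝓕(P)` is carried by that interval, and its length
is at most one of the numbers `|𝒜_l(P) - 𝒜_u(P)|` entering `d(|γ(P)|)`, with `P` itself as witness. -/

lemma msupp_subset_of_measure_compl_eq_zero {ν : Measure ℝ} {C : Set ℝ} (hC : IsClosed C)
    (hν : ν Cᶜ = 0) : msupp ν ⊆ C := by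
  intro z hz
  by_contra hzC
  obtain ⟨ε, hε, hball⟩ := Metric.isOpen_iff.mp hC.isOpen_compl z hzC
  exact (hz ε hε).ne' (measure_mono_null hball hν)

lemma gammaLen_le_of_msupp_subset {ν : Measure ℝ} {m M : ℝ} (hmM : m ≤ M)
    (hν : msupp ν ⊆ Icc m M) : gammaLen ν ≤ M - m := by
  rcases (msupp ν).eq_empty_or_nonempty with hempty | hne
  · simp [gammaLen, suppSup, suppInf, hempty, hmM]
  · have hsup : suppSup ν ≤ M := csSup_le hne fun x hx => (hν hx).2
    have hinf : m ≤ suppInf ν := le_csInf hne fun x hx => (hν hx).1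
    rw [gammaLen]
    linarith

lemma map_restrict_compl_eq_zero {α β : Type*} [MeasurableSpace α] [MeasurableSpace β]
    {μ : Measure α} {s : Set α} {C : Set β} {g : α → β} (hs : MeasurableSet s)
    (hC : MeasurableSet C) (hg : ∀ x ∈ s, g x ∈ C) : (μ.restrict s).map g Cᶜ = 0 := by
  by_cases hmeas : AEMeasurable g (μ.restrict s)
  · rw [Measure.map_apply_of_aemeasurable hmeas hC.compl]
    refine measure_mono_null (t := sᶜ) (fun x hx hxs => hx (hg x hxs)) ?_
    rw [Measure.restrict_apply' hs, compl_inter_self, measure_empty]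
  · rw [Measure.map_of_not_aemeasurable hmeas, Measure.coe_zero, Pi.zero_apply]

lemma invFunOn_mem_insert {α β : Type*} [Nonempty α] (f : α → β) (s : Set α) (y : β) :
    Function.invFunOn f s y ∈ insert (Classical.choice ‹Nonempty α›) s := by
  by_cases h : ∃ x ∈ s, f x = y
  · exact mem_insert_of_mem _ (Function.invFunOn_mem h)
  · rw [Function.invFunOn_neg h]
    exact mem_insert _ _

lemma abs_sub_QAM_le_diam {I : Set ℝ} (hI : Bornology.IsBounded I) (f g : ℝ → ℝ)
    (ν ν' : Measure ℝ) :
    |QAM f I ν - QAM g I ν'| ≤ Metric.diam (insert (Classical.choice inferInstance) I) :=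
  Metric.dist_le_diam_of_mem (hI.insert _) (invFunOn_mem_insert _ _ _) (invFunOn_mem_insert _ _ _)

theorem stmt19_general (a b : ℝ)
    (T : Finset (ℝ → ℝ))
    (F : ℝ → ℝ → ℝ)
    (hbd : ∀ x ∈ Icc (0:ℝ) 1, ∃ l ∈ T, ∃ u ∈ T, ∀ mu : Measure ℝ, IsCSP (Icc a b) mu →
      QAM l (Icc a b) mu ≤ QAM (F x) (Icc a b) mu ∧
      QAM (F x) (Icc a b) mu ≤ QAM u (Icc a b) mu) :
    ∀ mu : Measure ℝ, IsCSP (Icc a b) mu → 0 < gammaLen mu →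
      gammaLen (AF F (Icc a b) mu) ≤
        sSup {d : ℝ | ∃ l ∈ T, ∃ u ∈ T, ∃ nu : Measure ℝ,
          IsCSP (Icc a b) nu ∧ gammaLen nu ≤ gammaLen mu ∧
          d = |QAM l (Icc a b) nu - QAM u (Icc a b) nu|} := by
  intro mu hmu _
  have hT : T.Nonempty := by
    obtain ⟨l, hl, -⟩ := hbd 0 (left_mem_Icc.mpr zero_le_one)
    exact ⟨l, hl⟩
  obtain ⟨lm, hlm, hmin⟩ := T.exists_min_image (fun f => QAM f (Icc a b) mu) hT
  obtain ⟨um, hum, hmax⟩ := T.exists_max_image (fun f => QAM f (Icc a b) mu) hT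
  have hrange : ∀ x ∈ Icc (0:ℝ) 1,
      QAM (F x) (Icc a b) mu ∈ Icc (QAM lm (Icc a b) mu) (QAM um (Icc a b) mu) := by
    intro x hx
    obtain ⟨l, hl, u, hu, h⟩ := hbd x hx
    exact ⟨(hmin l hl).trans (h mu hmu).1, (h mu hmu).2.trans (hmax u hu)⟩
  have hlm_le_um : QAM lm (Icc a b) mu ≤ QAM um (Icc a b) mu :=
    let h0 := hrange 0 (left_mem_Icc.mpr zero_le_one)
    h0.1.trans h0.2
  calc gammaLen (AF F (Icc a b) mu)
      ≤ QAM um (Icc a b) mu - QAM lm (Icc a b) mu :=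
        gammaLen_le_of_msupp_subset hlm_le_um <|
          msupp_subset_of_measure_compl_eq_zero isClosed_Icc <|
            map_restrict_compl_eq_zero measurableSet_Icc measurableSet_Icc hrange
    _ ≤ |QAM lm (Icc a b) mu - QAM um (Icc a b) mu| := by
        rw [abs_sub_comm]
        exact le_abs_self _
    _ ≤ _ := by
        refine le_csSup ⟨Metric.diam (insert (Classical.choice inferInstance) (Icc a b)), ?_⟩
          ⟨lm, hlm, um, hum, mu, hmu, le_rfl, rfl⟩
        rintro d ⟨l, -, u, -, nu, -, -, rfl⟩
        exact abs_sub_QAM_le_diam (Metric.isBounded_Icc a b) l u nu nu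

theorem stmt19 (a b : ℝ) (hab : a ≤ b)
    (T : Finset (ℝ → ℝ)) (hT : ∀ f ∈ T, CM f (Icc a b))
    (F : ℝ → ℝ → ℝ) (hF : Admissible F (Icc a b))
    (hbd : ∀ x ∈ Icc (0:ℝ) 1, ∃ l ∈ T, ∃ u ∈ T, ∀ mu : Measure ℝ, IsCSP (Icc a b) mu →
      QAM l (Icc a b) mu ≤ QAM (F x) (Icc a b) mu ∧
      QAM (F x) (Icc a b) mu ≤ QAM u (Icc a b) mu) :
    ∀ mu : Measure ℝ, IsCSP (Icc a b) mu → 0 < gammaLen mu →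
      gammaLen (AF F (Icc a b) mu) ≤
        sSup {d : ℝ | ∃ l ∈ T, ∃ u ∈ T, ∃ nu : Measure ℝ,
          IsCSP (Icc a b) nu ∧ gammaLen nu ≤ gammaLen mu ∧
          d = |QAM l (Icc a b) nu - QAM u (Icc a b) nu|} :=
  stmt19_general a b T F hbd
end
end
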